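/- arXiv:1010.1836 — 6 statements merged into one kernel-verified Lean document; each statement's English description precedes it below -/
import Mathlib

section
/- Let W ⊆ ±[1,m] and k-j ≥ 0. The number of (k-j)-element subsets V'' ⊆ ±[1,m] with V'' ∩ W = ∅, such that every v'' ∈ V'' satisfies -v'' ∉ W, and V'' is free of opposites (v ∈ V'' implies -v ∉ V''), equals C(m - |W ∪ (-W)|/2, k-j)·2^{k-j}. -/
/-!
An opposite-free subset `V` of a finite set `S ∌ 0` closed under negation is determined by the
set `A` of absolute values of its elements, an `n`-subset of the positive part of `S`, together
with its positive part `T ⊆ A`, since `V = T ∪ -(A \ T)`; conversely every such pair arises.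
So there are `C(#S / 2, n) · 2 ^ n` of them. The conditions on `V` in the theorem say exactly that
`V` is an opposite-free subset of `±[1,m] \ (W ∪ -W)`, a symmetric set of size `2m - #(W ∪ -W)`.
-/

open scoped Classical

/-- The set ±[1,m] = {-m,…,-1,1,…,m} of nonzero integers of absolute value at most m. -/
noncomputable def pmSet (m : ℕ) : Finset ℤ := (Finset.Icc (-(m : ℤ)) (m : ℤ)).erase 0

open Finset
open scoped Pointwise

section OppositeFree

variable {α : Type*} [AddCommGroup α] [LinearOrder α]

lemma injOn_abs_of_forall_neg_notMem {V : Finset α} (hV : ∀ v ∈ V, -v ∉ V) :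
    Set.InjOn (|·|) (V : Set α) := by
  intro a ha b hb hab
  rcases abs_eq_abs.mp hab with h | h
  · exact h
  · exact absurd (h ▸ ha) (hV b hb)

lemma two_mul_card_filter_pos [IsOrderedAddMonoid α] {S : Finset α} (h0 : (0 : α) ∉ S)
    (hS : ∀ x ∈ S, -x ∈ S) :
    2 * #{x ∈ S | 0 < x} = #S := by
  have hnonpos : {x ∈ S | ¬0 < x} = -{x ∈ S | 0 < x} := by
    ext x
    simp only [mem_filter, mem_neg', not_lt, Left.neg_pos_iff]
    refine ⟨fun ⟨hx, hx0⟩ => ⟨hS x hx, hx0.lt_of_ne (by rintro rfl; exact h0 hx)⟩,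
      fun ⟨hx, hx0⟩ => ⟨by simpa using hS _ hx, hx0.le⟩⟩
  rw [← card_filter_add_card_filter_not (s := S) (0 < ·), hnonpos, card_neg, two_mul]

def negOutside (A T : Finset α) : Finset α := T ∪ -(A \ T)

variable {A T : Finset α}

lemma mem_negOutside {x : α} : x ∈ negOutside A T ↔ x ∈ T ∨ (-x ∈ A ∧ -x ∉ T) := by
  simp [negOutside, mem_neg']

lemma filter_pos_negOutside [IsOrderedAddMonoid α] (hA : ∀ a ∈ A, 0 < a) (hT : T ⊆ A) :
    {x ∈ negOutside A T | 0 < x} = T := by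
  ext x
  simp only [mem_filter, mem_negOutside]
  constructor
  · rintro ⟨hx | ⟨hx, -⟩, hpos⟩
    · exact hx
    · exact absurd (hA _ hx) (by simpa using hpos.le)
  · exact fun hx => ⟨Or.inl hx, hA x (hT hx)⟩

lemma image_abs_negOutside [IsOrderedAddMonoid α] (hA : ∀ a ∈ A, 0 < a) (hT : T ⊆ A) :
    (negOutside A T).image (|·|) = A := by
  ext a
  simp only [mem_image, mem_negOutside]
  constructor
  · rintro ⟨x, hx | ⟨hx, -⟩, rfl⟩
    · rw [abs_of_pos (hA x (hT hx))]; exact hT hx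
    · rwa [← abs_neg, abs_of_pos (hA _ hx)]
  · intro ha
    by_cases haT : a ∈ T
    · exact ⟨a, Or.inl haT, abs_of_pos (hA a ha)⟩
    · exact ⟨-a, Or.inr ⟨by rwa [neg_neg], by rwa [neg_neg]⟩,
        by rw [abs_neg, abs_of_pos (hA a ha)]⟩

lemma neg_notMem_negOutside [IsOrderedAddMonoid α] (hA : ∀ a ∈ A, 0 < a) (hT : T ⊆ A) :
    ∀ v ∈ negOutside A T, -v ∉ negOutside A T := by
  intro v hv hnv
  rw [mem_negOutside, neg_neg] at hnv
  rw [mem_negOutside] at hv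
  rcases hv with hv | ⟨hv, hvT⟩
  · rcases hnv with hnv | ⟨-, hnvT⟩
    · exact (hA _ (hT hnv)).not_gt (by simpa using hA v (hT hv))
    · exact hnvT hv
  · rcases hnv with hnv | ⟨hnv, -⟩
    · exact hvT hnv
    · exact (hA _ hv).not_gt (by simpa using hA v hnv)

lemma negOutside_image_abs_filter_pos [IsOrderedAddMonoid α] {V : Finset α} (h0 : (0 : α) ∉ V)
    (hV : ∀ v ∈ V, -v ∉ V) : negOutside (V.image (|·|)) {x ∈ V | 0 < x} = V := by
  ext x
  simp only [mem_negOutside, mem_filter, mem_image, not_and]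
  constructor
  · rintro (⟨hx, -⟩ | ⟨⟨a, ha, hax⟩, hpos⟩)
    · exact hx
    · rcases (ne_of_mem_of_not_mem ha h0).lt_or_gt with hneg | hpos'
      · rw [abs_of_neg hneg, neg_inj] at hax
        exact hax ▸ ha
      · rw [abs_of_pos hpos'] at hax
        exact absurd (hax ▸ hpos') (hpos (hax ▸ ha))
  · intro hx
    rcases (ne_of_mem_of_not_mem hx h0).lt_or_gt with hneg | hpos
    · exact Or.inr ⟨⟨x, hx, abs_of_neg hneg⟩, fun h => absurd h (hV x hx)⟩
    · exact Or.inl ⟨hx, hpos⟩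

lemma filter_image_abs_eq_image_negOutside [IsOrderedAddMonoid α] {S : Finset α}
    (h0 : (0 : α) ∉ S) (hS : ∀ x ∈ S, -x ∈ S) {n : ℕ} (hAS : A ⊆ {x ∈ S | 0 < x}) (hAn : #A = n) :
    {V ∈ {V ∈ S.powerset | #V = n ∧ ∀ v ∈ V, -v ∉ V} | V.image (|·|) = A}
      = A.powerset.image (negOutside A) := by
  have hA : ∀ a ∈ A, 0 < a := fun a ha => (mem_filter.mp (hAS ha)).2
  ext V
  simp only [mem_filter, mem_powerset, mem_image]
  constructor
  · rintro ⟨⟨hVS, -, hV⟩, rfl⟩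
    refine ⟨{x ∈ V | 0 < x}, fun x hx => ?_,
      negOutside_image_abs_filter_pos (fun h => h0 (hVS h)) hV⟩
    obtain ⟨hxV, hx⟩ := mem_filter.mp hx
    exact mem_image.mpr ⟨x, hxV, abs_of_pos hx⟩
  · rintro ⟨T, hT, rfl⟩
    have himage := image_abs_negOutside hA hT
    have hfree := neg_notMem_negOutside hA hT
    refine ⟨⟨fun x hx => ?_, ?_, hfree⟩, himage⟩
    · rcases mem_negOutside.mp hx with hx | ⟨hx, -⟩
      exacts [(mem_filter.mp (hAS (hT hx))).1, neg_neg x ▸ hS _ (mem_filter.mp (hAS hx)).1]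
    · rw [← card_image_of_injOn (injOn_abs_of_forall_neg_notMem hfree), himage, hAn]

theorem card_powerset_filter_oppositeFree [IsOrderedAddMonoid α] {S : Finset α}
    (h0 : (0 : α) ∉ S) (hS : ∀ x ∈ S, -x ∈ S) (n : ℕ) :
    #{V ∈ S.powerset | #V = n ∧ ∀ v ∈ V, -v ∉ V} = (#S / 2).choose n * 2 ^ n := by
  set P := {x ∈ S | 0 < x}
  set F := {V ∈ S.powerset | #V = n ∧ ∀ v ∈ V, -v ∉ V}
  have hmaps : Set.MapsTo (fun V : Finset α => V.image (|·|)) F (P.powersetCard n) := by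
    intro V hV
    rw [mem_coe, mem_filter, mem_powerset] at hV
    obtain ⟨hVS, hVn, hV⟩ := hV
    refine mem_powersetCard.mpr ⟨fun a ha => ?_, ?_⟩
    · obtain ⟨x, hx, rfl⟩ := mem_image.mp ha
      refine mem_filter.mpr ⟨?_, abs_pos.mpr (ne_of_mem_of_not_mem (hVS hx) h0)⟩
      rcases abs_choice x with h | h <;> rw [h]
      exacts [hVS hx, hS x (hVS hx)]
    · rw [card_image_of_injOn (injOn_abs_of_forall_neg_notMem hV), hVn]
  have hfiber : ∀ A ∈ P.powersetCard n, #{V ∈ F | V.image (|·|) = A} = 2 ^ n := by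
    intro A hA
    obtain ⟨hAP, hAn⟩ := mem_powersetCard.mp hA
    have hApos : ∀ a ∈ A, 0 < a := fun a ha => (mem_filter.mp (hAP ha)).2
    rw [filter_image_abs_eq_image_negOutside h0 hS hAP hAn, card_image_of_injOn, card_powerset, hAn]
    intro T hT T' hT' h
    rw [← filter_pos_negOutside hApos (mem_powerset.mp hT),
      ← filter_pos_negOutside hApos (mem_powerset.mp hT'), h]
  rw [card_eq_sum_card_fiberwise hmaps, sum_congr rfl hfiber, sum_const, card_powersetCard,
    smul_eq_mul, ← two_mul_card_filter_pos h0 hS, Nat.mul_div_cancel_left _ two_pos]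

end OppositeFree

lemma zero_notMem_pmSet (m : ℕ) : (0 : ℤ) ∉ pmSet m := notMem_erase 0 _

lemma neg_mem_pmSet {m : ℕ} {x : ℤ} (hx : x ∈ pmSet m) : -x ∈ pmSet m := by
  simp only [pmSet, mem_erase, mem_Icc] at hx ⊢
  omega

lemma card_pmSet (m : ℕ) : #(pmSet m) = 2 * m := by
  rw [pmSet, card_erase_of_mem (by simp), Int.card_Icc]
  omega

theorem stmt4_general (m : ℕ) (W : Finset ℤ) (hW : W ⊆ pmSet m)
    (j k : ℕ) :
    ((pmSet m).powerset.filter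
        (fun V => V.card = k - j ∧ V ∩ W = ∅ ∧ (∀ v ∈ V, -v ∉ W) ∧ ∀ v ∈ V, -v ∉ V)).card
      = (m - (W ∪ W.image (fun w => -w)).card / 2).choose (k - j) * 2 ^ (k - j) := by
  rw [image_neg_eq_neg]
  have hU : W ∪ -W ⊆ pmSet m :=
    union_subset hW fun x hx => neg_neg x ▸ neg_mem_pmSet (hW (mem_neg'.mp hx))
  have hUneg : ∀ x ∈ W ∪ -W, -x ∈ W ∪ -W := by
    intro x
    simp only [mem_union, mem_neg', neg_neg]
    exact Or.symm
  have hSneg : ∀ x ∈ pmSet m \ (W ∪ -W), -x ∈ pmSet m \ (W ∪ -W) := by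
    intro x hx
    rw [mem_sdiff] at hx ⊢
    exact ⟨neg_mem_pmSet hx.1, fun h => hx.2 (neg_neg x ▸ hUneg _ h)⟩
  have hfilter : (pmSet m).powerset.filter
        (fun V => V.card = k - j ∧ V ∩ W = ∅ ∧ (∀ v ∈ V, -v ∉ W) ∧ ∀ v ∈ V, -v ∉ V)
      = (pmSet m \ (W ∪ -W)).powerset.filter (fun V => #V = k - j ∧ ∀ v ∈ V, -v ∉ V) := by
    ext V
    simp only [mem_filter, mem_powerset, subset_sdiff, disjoint_union_right,
      ← disjoint_iff_inter_eq_empty, disjoint_left (s := V) (t := -W), mem_neg']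
    tauto
  rw [hfilter,
    card_powerset_filter_oppositeFree (fun h => zero_notMem_pmSet m (sdiff_subset h)) hSneg,
    card_sdiff_of_subset hU, card_pmSet,
    ← two_mul_card_filter_pos (fun h => zero_notMem_pmSet m (hU h)) hUneg]
  congr 2
  omega

theorem stmt4 (m : ℕ) (hm : 1 ≤ m) (W : Finset ℤ) (hW : W ⊆ pmSet m)
    (j k : ℕ) (hjk : j ≤ k) :
    ((pmSet m).powerset.filter
        (fun V => V.card = k - j ∧ V ∩ W = ∅ ∧ (∀ v ∈ V, -v ∉ W) ∧ ∀ v ∈ V, -v ∉ V)).card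
      = (m - (W ∪ W.image (fun w => -w)).card / 2).choose (k - j) * 2 ^ (k - j) :=
  stmt4_general m W hW j k
end

section
/- Let X be a finite set equipped with a fixed-point-free involution x ↦ -x, with |X| = 2m, and let 𝒜 be a family of subsets of X. By inclusion-exclusion, the number of k-element subsets V ⊆ X that are free of opposites and intersect every member of 𝒜 equals C(m,k)·2^k + Σ over nonempty subfamilies 𝒢 ⊆ 𝒜 of (-1)^{#𝒢} times Σ_{0 ≤ j ≤ k} C(|U ∪ (-U)| - |U|, j)·C(m - |U ∪ (-U)|/2, k-j)·2^{k-j}, where U = ⋃_{G ∈ 𝒢} G. -/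
open scoped Classical

lemma helperErase {α : Type*} [DecidableEq α] (neg : α → α) (Y : Finset α)
    (hinv : ∀ x ∈ Y, neg (neg x) = x) (z : α) (hz : z ∈ Y)
    (hnz : neg z ≠ z) (k : ℕ) :
    ((Y.powerset.filter (fun V => V.card = k + 1 ∧ ∀ v ∈ V, neg v ∉ V)).filter
        (fun V => z ∈ V)).card
      = (((Y.erase z).erase (neg z)).powerset.filter
          (fun V => V.card = k ∧ ∀ v ∈ V, neg v ∉ V)).card := by
  refine Finset.card_bij' (fun V _ => V.erase z) (fun W _ => insert z W) ?_ ?_ ?_ ?_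
  · intro V hV
    simp only [Finset.mem_filter, Finset.mem_powerset] at hV ⊢
    obtain ⟨⟨hVY, hVcard, hVfree⟩, hzV⟩ := hV
    refine ⟨?_, ?_, ?_⟩
    · rw [Finset.subset_erase, Finset.subset_erase]
      exact ⟨⟨(Finset.erase_subset _ _).trans hVY, Finset.notMem_erase _ _⟩,
        fun h => hVfree z hzV (Finset.mem_of_mem_erase h)⟩
    · rw [Finset.card_erase_of_mem hzV, hVcard]; omega
    · exact fun v hv h => hVfree v (Finset.mem_of_mem_erase hv) (Finset.mem_of_mem_erase h)
  · intro W hW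
    simp only [Finset.mem_filter, Finset.mem_powerset] at hW ⊢
    obtain ⟨hWY, hWcard, hWfree⟩ := hW
    have hzW : z ∉ W := (Finset.subset_erase.mp (hWY.trans (Finset.erase_subset _ _))).2
    have hWY' : ∀ w ∈ W, w ∈ Y ∧ w ≠ z ∧ w ≠ neg z := by
      intro w hw
      have h1 := hWY hw
      rw [Finset.mem_erase, Finset.mem_erase] at h1
      exact ⟨h1.2.2, h1.2.1, h1.1⟩
    refine ⟨⟨?_, ?_, ?_⟩, Finset.mem_insert_self _ _⟩
    · intro w hw
      rcases Finset.mem_insert.mp hw with rfl | hw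
      · exact hz
      · exact (hWY' w hw).1
    · rw [Finset.card_insert_of_notMem hzW, hWcard]
    · intro v hv hcon
      rcases Finset.mem_insert.mp hv with rfl | hv
      · rcases Finset.mem_insert.mp hcon with h | h
        · exact hnz h
        · exact (hWY' _ h).2.2 rfl
      · rcases Finset.mem_insert.mp hcon with h | h
        · exact (hWY' v hv).2.2 (by rw [← h, hinv v (hWY' v hv).1])
        · exact hWfree v hv h
  · intro V hV
    simp only [Finset.mem_filter] at hV
    exact Finset.insert_erase hV.2
  · intro W hW
    simp only [Finset.mem_filter, Finset.mem_powerset] at hW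
    have hzW : z ∉ W := (Finset.subset_erase.mp (hW.1.trans (Finset.erase_subset _ _))).2
    exact Finset.erase_insert hzW

lemma freeA {α : Type*} [DecidableEq α] (neg : α → α) :
    ∀ Y : Finset α, (∀ x ∈ Y, neg (neg x) = x) → (∀ x ∈ Y, neg x ≠ x) →
      (∀ x ∈ Y, neg x ∈ Y) →
      Even Y.card ∧ ∀ k, (Y.powerset.filter
        (fun V => V.card = k ∧ ∀ v ∈ V, neg v ∉ V)).card = (Y.card / 2).choose k * 2 ^ k := by
  intro Y
  induction Y using Finset.strongInduction with
  | _ Y IH =>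
  intro hinv hfpf hclosed
  rcases Y.eq_empty_or_nonempty with rfl | ⟨y, hy⟩
  · refine ⟨by simp, fun k => ?_⟩
    rw [Finset.powerset_empty, Finset.filter_singleton]
    cases k with
    | zero => simp
    | succ k => simp
  · have hny : neg y ∈ Y := hclosed y hy
    have hnz : neg y ≠ y := hfpf y hy
    have hinvy : neg (neg y) = y := hinv y hy
    set Y' := (Y.erase y).erase (neg y) with hY'
    have hsub : Y' ⊂ Y := by
      refine Finset.ssubset_iff_of_subset (((Finset.erase_subset _ _).trans
        (Finset.erase_subset _ _))) |>.mpr ⟨y, hy, ?_⟩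
      simp [hY']
    have hmem' : ∀ x ∈ Y', x ∈ Y ∧ x ≠ y ∧ x ≠ neg y := by
      intro x hx
      rw [hY', Finset.mem_erase, Finset.mem_erase] at hx
      exact ⟨hx.2.2, hx.2.1, hx.1⟩
    have hinv' : ∀ x ∈ Y', neg (neg x) = x := fun x hx => hinv x (hmem' x hx).1
    have hfpf' : ∀ x ∈ Y', neg x ≠ x := fun x hx => hfpf x (hmem' x hx).1
    have hclosed' : ∀ x ∈ Y', neg x ∈ Y' := by
      intro x hx
      obtain ⟨hxY, hxy, hxny⟩ := hmem' x hx
      rw [hY', Finset.mem_erase, Finset.mem_erase]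
      refine ⟨fun h => hxy ?_, fun h => hxny ?_, hclosed x hxY⟩
      · rw [← hinv x hxY, h, hinvy]
      · rw [← hinv x hxY, h]
    obtain ⟨heven', hcount'⟩ := IH Y' hsub hinv' hfpf' hclosed'
    have hcardY' : Y'.card = Y.card - 2 := by
      rw [hY', Finset.card_erase_of_mem (by rw [Finset.mem_erase]; exact ⟨hnz, hny⟩),
        Finset.card_erase_of_mem hy]
      omega
    have hYge2 : 2 ≤ Y.card := by
      have := Finset.one_lt_card.mpr ⟨y, hy, neg y, hny, fun h => hnz h.symm⟩
      omega
    have hcardY : Y.card = Y'.card + 2 := by omega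
    have heven : Even Y.card := by
      rw [hcardY]; exact heven'.add (even_two)
    refine ⟨heven, fun k => ?_⟩
    have hn : Y.card / 2 = Y'.card / 2 + 1 := by
      obtain ⟨t, ht⟩ := heven'; omega
    cases k with
    | zero =>
      have : Y.powerset.filter (fun V => V.card = 0 ∧ ∀ v ∈ V, neg v ∉ V) = {∅} := by
        ext V
        simp [Finset.card_eq_zero]
        constructor
        · tauto
        · rintro rfl; simp
      rw [this]; simp
    | succ k =>
      set S := Y.powerset.filter (fun V => V.card = k + 1 ∧ ∀ v ∈ V, neg v ∉ V) with hS
      have hsplit1 : (S.filter (fun V => y ∈ V)).card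
          + (S.filter (fun V => y ∉ V)).card = S.card :=
        Finset.card_filter_add_card_filter_not _
      have hsplit2 : ((S.filter (fun V => y ∉ V)).filter (fun V => neg y ∈ V)).card
          + ((S.filter (fun V => y ∉ V)).filter (fun V => neg y ∉ V)).card
          = (S.filter (fun V => y ∉ V)).card :=
        Finset.card_filter_add_card_filter_not _
      -- S₁
      have h1 : (S.filter (fun V => y ∈ V)).card
          = (Y'.card / 2).choose k * 2 ^ k := by
        rw [hS, helperErase neg Y hinv y hy hnz k, ← hY']
        have h := hcount' k
        rw [← h]; congr!
      -- S₂
      have h2 : ((S.filter (fun V => y ∉ V)).filter (fun V => neg y ∈ V)).card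
          = (Y'.card / 2).choose k * 2 ^ k := by
        have heq : (S.filter (fun V => y ∉ V)).filter (fun V => neg y ∈ V)
            = S.filter (fun V => neg y ∈ V) := by
          ext V
          simp only [hS, Finset.mem_filter, Finset.mem_powerset]
          constructor
          · rintro ⟨⟨hm, -⟩, h⟩; exact ⟨hm, h⟩
          · rintro ⟨⟨hmem, hP⟩, h⟩
            refine ⟨⟨⟨hmem, hP⟩, fun hyV => ?_⟩, h⟩
            have := hP.2 (neg y) h
            rw [hinvy] at this
            exact this hyV
        rw [heq, hS, helperErase neg Y hinv (neg y) hny (by rw [hinvy]; exact fun h => hnz h.symm) k]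
        rw [hinvy, Finset.erase_right_comm, ← hY']
        have h := hcount' k
        rw [← h]; congr!
      -- S₀
      have h0 : (S.filter (fun V => y ∉ V)).filter (fun V => neg y ∉ V)
          = Y'.powerset.filter (fun V => V.card = k + 1 ∧ ∀ v ∈ V, neg v ∉ V) := by
        ext V
        simp only [hS, Finset.mem_filter, Finset.mem_powerset, hY',
          Finset.subset_erase]
        tauto
      have h0c : ((S.filter (fun V => y ∉ V)).filter (fun V => neg y ∉ V)).card
          = (Y'.card / 2).choose (k + 1) * 2 ^ (k + 1) := by
        rw [h0]
        have h := hcount' (k + 1)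
        rw [← h]; congr!
      have : S.card = (Y'.card / 2).choose k * 2 ^ k + (Y'.card / 2).choose k * 2 ^ k
          + (Y'.card / 2).choose (k + 1) * 2 ^ (k + 1) := by
        omega
      have hfinal : S.card = (Y.card / 2).choose (k + 1) * 2 ^ (k + 1) := by
        rw [this, hn, Nat.choose_succ_succ]; ring
      rw [← hfinal]
      congr!

lemma coreCount {α : Type*} [DecidableEq α] (neg : α → α) (X : Finset α) (m : ℕ)
    (hinv : ∀ x ∈ X, neg (neg x) = x) (hfpf : ∀ x ∈ X, neg x ≠ x)
    (hclosed : ∀ x ∈ X, neg x ∈ X) (hcard : X.card = 2 * m)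
    (U : Finset α) (hU : U ⊆ X) (k : ℕ) :
    (X.powerset.filter (fun V => V.card = k ∧ (∀ v ∈ V, neg v ∉ V) ∧ V ∩ U = ∅)).card
      = ∑ j ∈ Finset.range (k + 1),
          ((U ∪ U.image neg).card - U.card).choose j
            * (m - (U ∪ U.image neg).card / 2).choose (k - j) * 2 ^ (k - j) := by
  set W := U ∪ U.image neg with hW
  set D := W \ U with hD
  set E := X \ W with hE
  have hWX : W ⊆ X := by
    rw [hW]
    refine Finset.union_subset hU ?_
    intro x hx
    obtain ⟨u, hu, rfl⟩ := Finset.mem_image.mp hx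
    exact hclosed u (hU hu)
  have hnegU : ∀ v ∈ W, v ∉ U → neg v ∈ U := by
    intro v hv hvU
    rcases Finset.mem_union.mp hv with h | h
    · exact absurd h hvU
    · obtain ⟨u, hu, rfl⟩ := Finset.mem_image.mp h
      rw [hinv u (hU hu)]; exact hu
  have hWclosed : ∀ x ∈ W, neg x ∈ W := by
    intro x hx
    rcases Finset.mem_union.mp hx with h | h
    · exact Finset.mem_union_right _ (Finset.mem_image_of_mem neg h)
    · obtain ⟨u, hu, rfl⟩ := Finset.mem_image.mp h
      rw [hinv u (hU hu)]; exact Finset.mem_union_left _ hu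
  have hWeven : Even W.card :=
    (freeA neg W (fun x hx => hinv x (hWX hx)) (fun x hx => hfpf x (hWX hx)) hWclosed).1
  have hEclosed : ∀ x ∈ E, neg x ∈ E := by
    intro x hx
    rw [hE, Finset.mem_sdiff] at hx ⊢
    refine ⟨hclosed x hx.1, fun h => hx.2 ?_⟩
    have := hWclosed _ h
    rwa [hinv x hx.1] at this
  have hEcount := (freeA neg E (fun x hx => hinv x (Finset.mem_sdiff.mp hx).1)
    (fun x hx => hfpf x (Finset.mem_sdiff.mp hx).1) hEclosed).2
  have hEcard : E.card = X.card - W.card := Finset.card_sdiff_of_subset hWX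
  have hWle : W.card ≤ X.card := Finset.card_le_card hWX
  have hEhalf : E.card / 2 = m - W.card / 2 := by
    obtain ⟨t, ht⟩ := hWeven; omega
  have hDcard : D.card = W.card - U.card :=
    Finset.card_sdiff_of_subset (by rw [hW]; exact Finset.subset_union_left)
  have hDE : Disjoint D E := by
    rw [Finset.disjoint_left]
    intro v hv hvE
    exact (Finset.mem_sdiff.mp hvE).2 (Finset.mem_sdiff.mp hv).1
  have hDU : ∀ v ∈ D, v ∉ U := fun v hv => (Finset.mem_sdiff.mp hv).2
  have hEU : ∀ v ∈ E, v ∉ U := by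
    intro v hv hvU
    exact (Finset.mem_sdiff.mp hv).2 (by rw [hW]; exact Finset.mem_union_left _ hvU)
  set T := X.powerset.filter (fun V => V.card = k ∧ (∀ v ∈ V, neg v ∉ V) ∧ V ∩ U = ∅) with hT
  have hVsub : ∀ V ∈ T, V ⊆ D ∪ E := by
    intro V hV
    rw [hT, Finset.mem_filter, Finset.mem_powerset] at hV
    obtain ⟨hVX, -, -, hVU⟩ := hV
    intro v hv
    have hvX := hVX hv
    have hvU : v ∉ U := fun h => by
      have : v ∈ V ∩ U := Finset.mem_inter.mpr ⟨hv, h⟩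
      rw [hVU] at this; exact absurd this (Finset.notMem_empty v)
    by_cases hvW : v ∈ W
    · exact Finset.mem_union_left _ (Finset.mem_sdiff.mpr ⟨hvW, hvU⟩)
    · exact Finset.mem_union_right _ (Finset.mem_sdiff.mpr ⟨hvX, hvW⟩)
  have hTsplit : T = (Finset.range (k + 1)).biUnion
      (fun j => T.filter (fun V => (V ∩ D).card = j)) := by
    ext V
    simp only [Finset.mem_biUnion, Finset.mem_range, Finset.mem_filter]
    constructor
    · intro hV
      refine ⟨(V ∩ D).card, ?_, hV, rfl⟩
      have h1 : V ∩ D ⊆ V := Finset.inter_subset_left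
      have h2 := Finset.card_le_card h1
      have : V.card = k := ((Finset.mem_filter.mp hV).2).1
      omega
    · rintro ⟨j, -, hV, -⟩; exact hV
  have hdisj : ∀ i ∈ Finset.range (k+1), ∀ j ∈ Finset.range (k+1), i ≠ j →
      Disjoint (T.filter (fun V => (V ∩ D).card = i)) (T.filter (fun V => (V ∩ D).card = j)) := by
    intro i _ j _ hij
    rw [Finset.disjoint_left]
    intro V h1 h2
    rw [Finset.mem_filter] at h1 h2
    exact hij (by rw [← h1.2, ← h2.2])
  have hDX : D ⊆ X := (Finset.sdiff_subset).trans hWX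
  have hEX : E ⊆ X := Finset.sdiff_subset
  have hslice : ∀ j, j ≤ k → (T.filter (fun V => (V ∩ D).card = j)).card
      = D.card.choose j * ((E.card / 2).choose (k - j) * 2 ^ (k - j)) := by
    intro j hj
    have hbij : (T.filter (fun V => (V ∩ D).card = j)).card
        = ((D.powersetCard j) ×ˢ (E.powerset.filter
            (fun B => B.card = k - j ∧ ∀ v ∈ B, neg v ∉ B))).card := by
      refine Finset.card_bij' (fun V _ => (V ∩ D, V ∩ E)) (fun p _ => p.1 ∪ p.2) ?_ ?_ ?_ ?_
      · intro V hV
        rw [Finset.mem_filter] at hV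
        obtain ⟨hVT, hVD⟩ := hV
        have hVsub' := hVsub V hVT
        simp only [hT, Finset.mem_filter, Finset.mem_powerset] at hVT
        obtain ⟨hVX, hVk, hVfree, hVU⟩ := hVT
        have hunion : V ∩ D ∪ V ∩ E = V := by
          rw [← Finset.inter_union_distrib_left]
          exact Finset.inter_eq_left.mpr hVsub'
        have hcards : (V ∩ D).card + (V ∩ E).card = V.card := by
          rw [← Finset.card_union_of_disjoint
            (hDE.mono Finset.inter_subset_right Finset.inter_subset_right), hunion]
        simp only [Finset.mem_product, Finset.mem_powersetCard, Finset.mem_filter,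
          Finset.mem_powerset]
        exact ⟨⟨Finset.inter_subset_right, hVD⟩, Finset.inter_subset_right, by omega,
          fun v hv h => hVfree v (Finset.mem_of_mem_inter_left hv)
            (Finset.mem_of_mem_inter_left h)⟩
      · rintro ⟨A, B⟩ hp
        simp only [Finset.mem_product, Finset.mem_powersetCard, Finset.mem_filter,
          Finset.mem_powerset] at hp
        obtain ⟨⟨hA, hAcard⟩, hB, hBcard, hBfree⟩ := hp
        have hABdisj : Disjoint A B := hDE.mono hA hB
        have hBD : B ∩ D = ∅ :=
          Finset.disjoint_iff_inter_eq_empty.mp (hDE.symm.mono hB le_rfl)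
        simp only [Finset.mem_filter]
        constructor
        · simp only [hT, Finset.mem_filter, Finset.mem_powerset]
          refine ⟨Finset.union_subset (hA.trans hDX) (hB.trans hEX), ?_, ?_, ?_⟩
          · rw [Finset.card_union_of_disjoint hABdisj, hAcard, hBcard]; omega
          · intro v hv hcon
            rcases Finset.mem_union.mp hv with h | h
            · have hvD := hA h
              have hnvU : neg v ∈ U :=
                hnegU v (Finset.mem_sdiff.mp hvD).1 (Finset.mem_sdiff.mp hvD).2
              rcases Finset.mem_union.mp hcon with h' | h'
              · exact hDU _ (hA h') hnvU
              · exact hEU _ (hB h') hnvU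
            · have hnvE : neg v ∈ E := hEclosed v (hB h)
              rcases Finset.mem_union.mp hcon with h' | h'
              · exact Finset.disjoint_left.mp hDE (hA h') hnvE
              · exact hBfree v h h'
          · rw [Finset.eq_empty_iff_forall_notMem]
            intro v hv
            obtain ⟨hv1, hv2⟩ := Finset.mem_inter.mp hv
            rcases Finset.mem_union.mp hv1 with h | h
            · exact hDU _ (hA h) hv2
            · exact hEU _ (hB h) hv2
        · rw [Finset.union_inter_distrib_right, Finset.inter_eq_left.mpr hA, hBD,
            Finset.union_empty, hAcard]
      · intro V hV
        rw [Finset.mem_filter] at hV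
        have hVsub' := hVsub V hV.1
        show V ∩ D ∪ V ∩ E = V
        rw [← Finset.inter_union_distrib_left]
        exact Finset.inter_eq_left.mpr hVsub'
      · rintro ⟨A, B⟩ hp
        simp only [Finset.mem_product, Finset.mem_powersetCard, Finset.mem_filter,
          Finset.mem_powerset] at hp
        obtain ⟨⟨hA, -⟩, hB, -, -⟩ := hp
        have hBD : B ∩ D = ∅ :=
          Finset.disjoint_iff_inter_eq_empty.mp (hDE.symm.mono hB le_rfl)
        have hAE : A ∩ E = ∅ :=
          Finset.disjoint_iff_inter_eq_empty.mp (hDE.mono hA le_rfl)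
        have e1 : (A ∪ B) ∩ D = A := by
          rw [Finset.union_inter_distrib_right, Finset.inter_eq_left.mpr hA, hBD,
            Finset.union_empty]
        have e2 : (A ∪ B) ∩ E = B := by
          rw [Finset.union_inter_distrib_right, Finset.inter_eq_left.mpr hB, hAE,
            Finset.empty_union]
        simp [e1, e2]
    rw [hbij, Finset.card_product, Finset.card_powersetCard]
    have h := hEcount (k - j)
    rw [← h]
    congr!
  rw [hTsplit, Finset.card_biUnion hdisj]
  refine Finset.sum_congr rfl ?_
  intro j hj
  rw [Finset.mem_range] at hj
  rw [hslice j (by omega), hDcard, hEhalf]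
  ring

theorem stmt6 {α : Type*} [DecidableEq α] (neg : α → α) (X : Finset α) (m : ℕ)
    (hinv : ∀ x ∈ X, neg (neg x) = x) (hfpf : ∀ x ∈ X, neg x ≠ x)
    (hclosed : ∀ x ∈ X, neg x ∈ X) (hcard : X.card = 2 * m)
    (𝒜 : Finset (Finset α)) (h𝒜 : ∀ A ∈ 𝒜, A ⊆ X) (k : ℕ) (hk : k ≤ m) :
    ((X.powerset.filter
        (fun V => V.card = k ∧ (∀ v ∈ V, neg v ∉ V) ∧ ∀ A ∈ 𝒜, (V ∩ A).Nonempty)).card : ℤ)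
      = (m.choose k * 2 ^ k : ℕ)
        + ∑ 𝒢 ∈ 𝒜.powerset.filter (fun 𝒢 => 𝒢.Nonempty),
            (-1 : ℤ) ^ 𝒢.card
              * ∑ j ∈ Finset.range (k + 1),
                  ((((𝒢.sup id ∪ (𝒢.sup id).image neg).card - (𝒢.sup id).card).choose j
                    * (m - (𝒢.sup id ∪ (𝒢.sup id).image neg).card / 2).choose (k - j)
                    * 2 ^ (k - j) : ℕ) : ℤ) := by
  set B := X.powerset.filter (fun V => V.card = k ∧ ∀ v ∈ V, neg v ∉ V) with hB
  have key : ∀ 𝒢 ∈ 𝒜.powerset,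
      ((X.powerset.filter
          (fun V => V.card = k ∧ (∀ v ∈ V, neg v ∉ V) ∧ V ∩ (𝒢.sup id) = ∅)).card : ℤ)
        = ∑ j ∈ Finset.range (k + 1),
            ((((𝒢.sup id ∪ (𝒢.sup id).image neg).card - (𝒢.sup id).card).choose j
              * (m - (𝒢.sup id ∪ (𝒢.sup id).image neg).card / 2).choose (k - j)
              * 2 ^ (k - j) : ℕ) : ℤ) := by
    intro 𝒢 h𝒢
    have hU : 𝒢.sup id ⊆ X := by
      refine Finset.sup_le fun G hG => h𝒜 G (Finset.mem_powerset.mp h𝒢 hG)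
    have := coreCount neg X m hinv hfpf hclosed hcard (𝒢.sup id) hU k
    rw [this]
    push_cast
    rfl
  have hset : ∀ 𝒢 : Finset (Finset α), B.filter (fun V => ∀ G ∈ 𝒢, V ∩ G = ∅)
      = X.powerset.filter
          (fun V => V.card = k ∧ (∀ v ∈ V, neg v ∉ V) ∧ V ∩ (𝒢.sup id) = ∅) := by
    intro 𝒢
    have hiff : ∀ V : Finset α, (V ∩ 𝒢.sup id = ∅) ↔ ∀ G ∈ 𝒢, V ∩ G = ∅ := by
      intro V
      rw [← Finset.disjoint_iff_inter_eq_empty, Finset.disjoint_sup_right]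
      constructor
      · intro h G hG; exact Finset.disjoint_iff_inter_eq_empty.mp (h hG)
      · intro h G hG; exact Finset.disjoint_iff_inter_eq_empty.mpr (h G hG)
    ext V
    simp only [hB, Finset.mem_filter, Finset.mem_powerset, hiff]
    tauto
  have h1 : X.powerset.filter
      (fun V => V.card = k ∧ (∀ v ∈ V, neg v ∉ V) ∧ ∀ A ∈ 𝒜, (V ∩ A).Nonempty)
      = B.filter (fun V => ∀ A ∈ 𝒜, (V ∩ A).Nonempty) := by
    ext V
    simp only [hB, Finset.mem_filter, Finset.mem_powerset]
    tauto
  rw [h1]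
  have h2 : ((B.filter (fun V => ∀ A ∈ 𝒜, (V ∩ A).Nonempty)).card : ℤ)
      = ∑ V ∈ B, ∏ A ∈ 𝒜, ((if (V ∩ A) = ∅ then (-1 : ℤ) else 0) + 1) := by
    rw [← Finset.sum_boole]
    refine Finset.sum_congr rfl fun V hV => ?_
    rw [← Finset.prod_boole]
    refine Finset.prod_congr rfl fun A hA => ?_
    by_cases h : (V ∩ A) = ∅
    · have : ¬ (V ∩ A).Nonempty := by rw [Finset.nonempty_iff_ne_empty]; simpa using h
      simp [h, this]
    · have : (V ∩ A).Nonempty := Finset.nonempty_iff_ne_empty.mpr h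
      simp [h, this]
  have h3 : ∀ V : Finset α, (∏ A ∈ 𝒜, ((if (V ∩ A) = ∅ then (-1 : ℤ) else 0) + 1))
      = ∑ 𝒢 ∈ 𝒜.powerset, (-1 : ℤ) ^ 𝒢.card * (if ∀ G ∈ 𝒢, V ∩ G = ∅ then 1 else 0) := by
    intro V
    rw [Finset.prod_add]
    refine Finset.sum_congr rfl fun 𝒢 h𝒢 => ?_
    rw [Finset.prod_const_one, mul_one]
    have e : ∀ G ∈ 𝒢, (if (V ∩ G) = ∅ then (-1 : ℤ) else 0)
        = (-1) * (if (V ∩ G) = ∅ then 1 else 0) := by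
      intro G _; split <;> ring
    rw [Finset.prod_congr rfl e, Finset.prod_mul_distrib, Finset.prod_const,
      Finset.prod_boole]
  have h4 : ((B.filter (fun V => ∀ A ∈ 𝒜, (V ∩ A).Nonempty)).card : ℤ)
      = ∑ 𝒢 ∈ 𝒜.powerset, (-1 : ℤ) ^ 𝒢.card
          * ((B.filter (fun V => ∀ G ∈ 𝒢, V ∩ G = ∅)).card : ℤ) := by
    rw [h2]
    calc ∑ V ∈ B, ∏ A ∈ 𝒜, ((if (V ∩ A) = ∅ then (-1 : ℤ) else 0) + 1)
        = ∑ V ∈ B, ∑ 𝒢 ∈ 𝒜.powerset,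
            (-1 : ℤ) ^ 𝒢.card * (if ∀ G ∈ 𝒢, V ∩ G = ∅ then 1 else 0) :=
          Finset.sum_congr rfl fun V _ => h3 V
      _ = ∑ 𝒢 ∈ 𝒜.powerset, ∑ V ∈ B,
            (-1 : ℤ) ^ 𝒢.card * (if ∀ G ∈ 𝒢, V ∩ G = ∅ then 1 else 0) :=
          Finset.sum_comm
      _ = ∑ 𝒢 ∈ 𝒜.powerset, (-1 : ℤ) ^ 𝒢.card
            * ((B.filter (fun V => ∀ G ∈ 𝒢, V ∩ G = ∅)).card : ℤ) := by
          refine Finset.sum_congr rfl fun 𝒢 _ => ?_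
          rw [← Finset.mul_sum, Finset.sum_boole]
  rw [h4]
  have h5 : ∀ 𝒢 ∈ 𝒜.powerset, (-1 : ℤ) ^ 𝒢.card
      * ((B.filter (fun V => ∀ G ∈ 𝒢, V ∩ G = ∅)).card : ℤ)
      = (-1 : ℤ) ^ 𝒢.card * ∑ j ∈ Finset.range (k + 1),
          ((((𝒢.sup id ∪ (𝒢.sup id).image neg).card - (𝒢.sup id).card).choose j
            * (m - (𝒢.sup id ∪ (𝒢.sup id).image neg).card / 2).choose (k - j)
            * 2 ^ (k - j) : ℕ) : ℤ) := by
    intro 𝒢 h𝒢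
    rw [hset 𝒢, key 𝒢 h𝒢]
  rw [Finset.sum_congr rfl h5]
  rw [← Finset.sum_filter_add_sum_filter_not 𝒜.powerset (fun 𝒢 => 𝒢.Nonempty)]
  have hempty : 𝒜.powerset.filter (fun 𝒢 => ¬ 𝒢.Nonempty) = {∅} := by
    ext 𝒢
    simp [Finset.not_nonempty_iff_eq_empty, Finset.mem_powerset]
    intro h; subst h; exact Finset.empty_subset _
  rw [hempty, Finset.sum_singleton]
  have hzero : (∑ j ∈ Finset.range (k + 1),
      ((((((∅ : Finset (Finset α)).sup id) ∪ ((∅ : Finset (Finset α)).sup id).image neg).card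
          - ((∅ : Finset (Finset α)).sup id).card).choose j
        * (m - (((∅ : Finset (Finset α)).sup id) ∪
            ((∅ : Finset (Finset α)).sup id).image neg).card / 2).choose (k - j)
        * 2 ^ (k - j) : ℕ) : ℤ))
      = ((m.choose k * 2 ^ k : ℕ) : ℤ) := by
    have e : ((∅ : Finset (Finset α)).sup id) = (∅ : Finset α) := rfl
    rw [e]
    simp only [Finset.image_empty, Finset.empty_union, Finset.card_empty, Nat.sub_zero,
      Nat.zero_div]
    rw [Finset.sum_eq_single_of_mem 0 (Finset.mem_range.mpr (Nat.succ_pos k))]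
    · simp
    · intro j hj hjne
      rw [Nat.choose_eq_zero_of_lt (Nat.pos_of_ne_zero hjne)]
      simp
  rw [Finset.card_empty, pow_zero, one_mul, hzero, add_comm]
end

section
/- For a simple oriented matroid M with tope set T and for every k with 1 ≤ k ≤ |T|/2, the number of tope committees of cardinality k satisfies κ*_k(M) = Σ over 1 ≤ j ≤ k with j ≡ k (mod 2) of C((|T| - 2j)/2, (k-j)/2)·κ°*_j(M), where κ°*_j(M) is the number of tope committees of cardinality j containing no pair of opposite topes. -/
open scoped Classical

/-- Negation of a sign vector (tope), `+` ↔ `true`, `-` ↔ `false`. -/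
def negT {E : Type*} (f : E → Bool) : E → Bool := fun e => !(f e)

/-- `K` is a tope committee for the (simple) oriented matroid with tope set `T`:
`K ⊆ T` and for every ground element `e`, strictly more than half of the members
of `K` have sign `+` at `e`. -/
def IsCommittee {E : Type*} (T K : Finset (E → Bool)) : Prop :=
  K ⊆ T ∧ ∀ e : E, K.card < 2 * (K.filter (fun f => f e = true)).card

/-- `κ*_k`: the number of tope committees of cardinality `k`. -/
noncomputable def kappa {E : Type*} (T : Finset (E → Bool)) (k : ℕ) : ℕ :=
  (T.powerset.filter (fun K => K.card = k ∧ IsCommittee T K)).card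

/-- `κ°*_k`: the number of tope committees of cardinality `k` containing no pair
of opposite topes. -/
noncomputable def kappaFree {E : Type*} (T : Finset (E → Bool)) (k : ℕ) : ℕ :=
  (T.powerset.filter
    (fun K => K.card = k ∧ IsCommittee T K ∧ ∀ f ∈ K, negT f ∉ K)).card

/-!
A committee `K` splits as its opposite-free part `K₀` (the topes whose opposite is not in `K`)
together with a set of whole opposite pairs; the pairs contribute exactly half of their members
to every coordinate count, so `K` is a committee iff `K₀` is, and `|K| ≡ |K₀| (mod 2)`.
Conversely, for a fixed opposite-free committee `K₀` of size `j`, the committees of size `k`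
with opposite-free part `K₀` are `K₀ ∪ P` for `P` a union of `(k - j)/2` of the
`(|T| - 2j)/2` opposite pairs of `T` avoiding `±K₀`.
-/

open Finset

section

variable {E : Type*}

@[simp] lemma negT_apply (f : E → Bool) (e : E) : negT f e = !f e := rfl

@[simp] lemma negT_negT (f : E → Bool) : negT (negT f) = f := by
  funext e; simp

lemma negT_injective : Function.Injective (negT : (E → Bool) → E → Bool) :=
  Function.LeftInverse.injective negT_negT

def IsNegClosed (P : Finset (E → Bool)) : Prop := ∀ f ∈ P, negT f ∈ P

lemma IsNegClosed.negT_mem_iff {P : Finset (E → Bool)} (hP : IsNegClosed P) {f : E → Bool} :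
    negT f ∈ P ↔ f ∈ P :=
  ⟨fun h => by simpa using hP _ h, hP f⟩

lemma IsNegClosed.card_eq_two_mul {P : Finset (E → Bool)} (hP : IsNegClosed P) (e : E) :
    P.card = 2 * (P.filter (fun f => f e = true)).card := by
  have hswap : (P.filter (fun f => ¬f e = true)).card = (P.filter (fun f => f e = true)).card :=
    card_nbij' negT negT
      (fun f hf => by simp only [coe_filter, Set.mem_ofPred_eq] at hf ⊢; simp [hP f hf.1, hf.2])
      (fun f hf => by simp only [coe_filter, Set.mem_ofPred_eq] at hf ⊢; simp [hP f hf.1, hf.2])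
      (fun f _ => negT_negT f) (fun f _ => negT_negT f)
  have := card_filter_add_card_filter_not (s := P) (p := fun f => f e = true)
  omega

lemma isCommittee_union_iff {T K P : Finset (E → Bool)} (hd : Disjoint K P)
    (hP : IsNegClosed P) (hPT : P ⊆ T) :
    IsCommittee T (K ∪ P) ↔ IsCommittee T K := by
  have hcount : ∀ e, (K ∪ P).card < 2 * ((K ∪ P).filter (fun f => f e = true)).card ↔
      K.card < 2 * (K.filter (fun f => f e = true)).card := by
    intro e
    rw [filter_union, card_union_of_disjoint hd,
      card_union_of_disjoint (disjoint_filter_filter hd), hP.card_eq_two_mul e]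
    omega
  simp only [IsCommittee, union_subset_iff, hPT, and_true, hcount]

lemma IsCommittee.nonempty [Nonempty E] {T K : Finset (E → Bool)} (hK : IsCommittee T K) :
    K.Nonempty := by
  obtain ⟨e⟩ := ‹Nonempty E›
  rw [nonempty_iff_ne_empty]
  rintro rfl
  simpa using hK.2 e

lemma IsNegClosed.sdiff {R S : Finset (E → Bool)} (hR : IsNegClosed R) (hS : IsNegClosed S) :
    IsNegClosed (R \ S) := fun f hf => by
  rw [mem_sdiff] at hf ⊢
  exact ⟨hR f hf.1, fun h => hf.2 (hS.negT_mem_iff.mp h)⟩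

noncomputable def negClosure (S : Finset (E → Bool)) : Finset (E → Bool) := S ∪ S.image negT

lemma mem_negClosure {S : Finset (E → Bool)} {f : E → Bool} :
    f ∈ negClosure S ↔ f ∈ S ∨ negT f ∈ S := by
  rw [negClosure, mem_union, mem_image]
  refine or_congr_right ⟨?_, fun h => ⟨negT f, h, negT_negT f⟩⟩
  rintro ⟨g, hg, rfl⟩
  simpa using hg

lemma isNegClosed_negClosure (S : Finset (E → Bool)) : IsNegClosed (negClosure S) := by
  intro f hf
  rw [mem_negClosure] at hf ⊢
  simpa [or_comm] using hf

lemma negClosure_subset {S R : Finset (E → Bool)} (hR : IsNegClosed R) (hS : S ⊆ R) :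
    negClosure S ⊆ R := by
  intro f hf
  rcases mem_negClosure.mp hf with h | h
  · exact hS h
  · exact hR.negT_mem_iff.mp (hS h)

lemma card_negClosure {S : Finset (E → Bool)} (hS : ∀ f ∈ S, negT f ∉ S) :
    (negClosure S).card = 2 * S.card := by
  have hd : Disjoint S (S.image negT) := by
    rw [disjoint_left]
    rintro f hf hf'
    obtain ⟨g, hg, rfl⟩ := mem_image.mp hf'
    exact hS g hg hf
  rw [negClosure, card_union_of_disjoint hd, card_image_of_injective _ negT_injective]
  omega

lemma IsNegClosed.negClosure_filter {P : Finset (E → Bool)} (hP : IsNegClosed P) (e : E) :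
    negClosure (P.filter (fun f => f e = true)) = P := by
  ext f
  cases hfe : f e <;> simp [mem_negClosure, hfe, hP.negT_mem_iff]

lemma negClosure_filter_of_forall {S : Finset (E → Bool)} {e : E} (hS : ∀ f ∈ S, f e = true) :
    (negClosure S).filter (fun f => f e = true) = S := by
  ext f
  simp only [mem_filter, mem_negClosure]
  constructor
  · rintro ⟨h | h, hfe⟩
    · exact h
    · simpa [hfe] using hS _ h
  · exact fun h => ⟨Or.inl h, hS f h⟩

lemma card_negClosed_subsets_eq_choose [Nonempty E] {R : Finset (E → Bool)}
    (hR : IsNegClosed R) (s : ℕ) :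
    (R.powerset.filter (fun P => P.card = 2 * s ∧ IsNegClosed P)).card
      = (R.card / 2).choose s := by
  obtain ⟨e⟩ := ‹Nonempty E›
  have hH : R.card / 2 = (R.filter (fun f => f e = true)).card := by
    have := hR.card_eq_two_mul e
    omega
  rw [hH, ← card_powersetCard]
  -- a negation-closed set is the negation closure of its members that are positive at `e`
  refine card_nbij' (fun P => P.filter (fun f => f e = true)) negClosure ?_ ?_ ?_ ?_
  · intro P hP
    simp only [coe_filter, mem_powerset, Set.mem_ofPred_eq, mem_coe, mem_powersetCard] at hP ⊢
    refine ⟨filter_subset_filter _ hP.1, ?_⟩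
    have := hP.2.2.card_eq_two_mul e
    omega
  · intro S hS
    simp only [coe_filter, mem_powerset, Set.mem_ofPred_eq, mem_coe, mem_powersetCard] at hS ⊢
    have hSe : ∀ f ∈ S, f e = true := fun f hf => (mem_filter.mp (hS.1 hf)).2
    refine ⟨negClosure_subset hR (hS.1.trans (filter_subset _ _)), ?_, isNegClosed_negClosure S⟩
    rw [card_negClosure fun f hf hf' => by simpa [hSe f hf] using hSe _ hf', hS.2]
  · intro P hP
    exact (mem_filter.mp hP).2.2.negClosure_filter e
  · intro S hS
    exact negClosure_filter_of_forall fun f hf => (mem_filter.mp ((mem_powersetCard.mp hS).1 hf)).2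

noncomputable def freePart (K : Finset (E → Bool)) : Finset (E → Bool) :=
  K.filter (fun f => negT f ∉ K)

noncomputable def pairPart (K : Finset (E → Bool)) : Finset (E → Bool) :=
  K.filter (fun f => negT f ∈ K)

lemma freePart_subset (K : Finset (E → Bool)) : freePart K ⊆ K := filter_subset _ _

lemma freePart_union_pairPart (K : Finset (E → Bool)) : freePart K ∪ pairPart K = K := by
  rw [freePart, pairPart, union_comm]
  exact filter_union_filter_not_eq _ K

lemma disjoint_freePart_pairPart (K : Finset (E → Bool)) : Disjoint (freePart K) (pairPart K) :=
  (disjoint_filter_filter_not K K _).symm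

lemma card_freePart_add_card_pairPart (K : Finset (E → Bool)) :
    (freePart K).card + (pairPart K).card = K.card := by
  rw [← card_union_of_disjoint (disjoint_freePart_pairPart K), freePart_union_pairPart]

lemma isNegClosed_pairPart (K : Finset (E → Bool)) : IsNegClosed (pairPart K) := by
  intro f hf
  rw [pairPart, mem_filter] at hf ⊢
  exact ⟨hf.2, by simpa using hf.1⟩

lemma negT_notMem_freePart (K : Finset (E → Bool)) : ∀ f ∈ freePart K, negT f ∉ freePart K := by
  intro f hf hnf
  exact (mem_filter.mp hf).2 (freePart_subset K hnf)

lemma pairPart_eq_sdiff (K : Finset (E → Bool)) : pairPart K = K \ negClosure (freePart K) := by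
  ext f
  simp only [pairPart, freePart, mem_sdiff, mem_filter, mem_negClosure, negT_negT]
  tauto

lemma isCommittee_freePart_iff {T K : Finset (E → Bool)} (hKT : K ⊆ T) :
    IsCommittee T (freePart K) ↔ IsCommittee T K := by
  conv_rhs => rw [← freePart_union_pairPart K]
  exact (isCommittee_union_iff (disjoint_freePart_pairPart K) (isNegClosed_pairPart K)
    ((filter_subset _ _).trans hKT)).symm

lemma card_freePart_mod_two [Nonempty E] (K : Finset (E → Bool)) :
    (freePart K).card % 2 = K.card % 2 := by
  obtain ⟨e⟩ := ‹Nonempty E›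
  have := (isNegClosed_pairPart K).card_eq_two_mul e
  have := card_freePart_add_card_pairPart K
  omega

lemma notMem_and_negT_notMem_of_disjoint_negClosure {K₀ P : Finset (E → Bool)}
    (hd : Disjoint (negClosure K₀) P) {f : E → Bool} (hf : f ∈ K₀) : f ∉ P ∧ negT f ∉ P :=
  ⟨disjoint_left.mp hd (mem_negClosure.mpr (Or.inl hf)),
    disjoint_left.mp hd (mem_negClosure.mpr (Or.inr (by simpa using hf)))⟩

lemma freePart_union {K₀ P : Finset (E → Bool)} (hK₀ : ∀ f ∈ K₀, negT f ∉ K₀)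
    (hP : IsNegClosed P) (hd : Disjoint (negClosure K₀) P) : freePart (K₀ ∪ P) = K₀ := by
  ext f
  have := hK₀ f
  have := hP f
  have := notMem_and_negT_notMem_of_disjoint_negClosure hd (f := f)
  simp only [freePart, mem_filter, mem_union]
  tauto

lemma pairPart_union {K₀ P : Finset (E → Bool)} (hK₀ : ∀ f ∈ K₀, negT f ∉ K₀)
    (hP : IsNegClosed P) (hd : Disjoint (negClosure K₀) P) : pairPart (K₀ ∪ P) = P := by
  ext f
  have := hK₀ f
  have := hP f
  have := notMem_and_negT_notMem_of_disjoint_negClosure hd (f := f)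
  simp only [pairPart, mem_filter, mem_union]
  tauto

noncomputable def committees (T : Finset (E → Bool)) (k : ℕ) : Finset (Finset (E → Bool)) :=
  T.powerset.filter (fun K => K.card = k ∧ IsCommittee T K)

lemma mem_committees {T K : Finset (E → Bool)} {k : ℕ} :
    K ∈ committees T k ↔ K.card = k ∧ IsCommittee T K := by
  simp only [committees, mem_filter, mem_powerset, and_iff_right_iff_imp]
  exact fun h => h.2.1

lemma card_committees_filter_freePart_eq [Nonempty E] {T K₀ : Finset (E → Bool)}
    (hT : IsNegClosed T) (hK₀ : IsCommittee T K₀) (hK₀free : ∀ f ∈ K₀, negT f ∉ K₀) {k : ℕ}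
    (hk : K₀.card ≤ k) (hpar : K₀.card % 2 = k % 2) :
    ((committees T k).filter (fun K => freePart K = K₀)).card
      = ((T.card - 2 * K₀.card) / 2).choose ((k - K₀.card) / 2) := by
  have hK₀T : negClosure K₀ ⊆ T := negClosure_subset hT hK₀.1
  have hR : IsNegClosed (T \ negClosure K₀) := hT.sdiff (isNegClosed_negClosure K₀)
  have hRcard : (T \ negClosure K₀).card = T.card - 2 * K₀.card := by
    rw [card_sdiff_of_subset hK₀T, card_negClosure hK₀free]
  rw [← hRcard, ← card_negClosed_subsets_eq_choose hR,
    show 2 * ((k - K₀.card) / 2) = k - K₀.card by omega]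
  refine card_nbij' pairPart (K₀ ∪ ·) ?_ ?_ ?_ ?_
  · intro K hK
    simp only [coe_filter, mem_powerset, Set.mem_ofPred_eq, mem_committees] at hK ⊢
    obtain ⟨⟨hKk, hK⟩, rfl⟩ := hK
    refine ⟨?_, ?_, isNegClosed_pairPart K⟩
    · rw [pairPart_eq_sdiff]
      exact sdiff_subset_sdiff hK.1 le_rfl
    · have := card_freePart_add_card_pairPart K
      omega
  · intro P hP
    simp only [coe_filter, mem_powerset, Set.mem_ofPred_eq, mem_committees] at hP ⊢
    obtain ⟨hPR, hPk, hP⟩ := hP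
    have hd : Disjoint (negClosure K₀) P := disjoint_of_subset_right hPR disjoint_sdiff
    have hd' : Disjoint K₀ P := disjoint_of_subset_left subset_union_left hd
    refine ⟨⟨?_, ?_⟩, freePart_union hK₀free hP hd⟩
    · rw [card_union_of_disjoint hd']
      omega
    · exact (isCommittee_union_iff hd' hP (hPR.trans sdiff_subset)).mpr hK₀
  · intro K hK
    rw [← (mem_filter.mp hK).2]
    exact freePart_union_pairPart K
  · intro P hP
    obtain ⟨hPR, -, hP⟩ := (mem_filter.mp hP).imp_left mem_powerset.mp
    exact pairPart_union hK₀free hP (disjoint_of_subset_right hPR disjoint_sdiff)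

lemma card_committees_filter_card_freePart [Nonempty E] {T : Finset (E → Bool)}
    (hT : IsNegClosed T) {k j : ℕ} (hjk : j ≤ k) :
    ((committees T k).filter (fun K => (freePart K).card = j)).card
      = if 1 ≤ j ∧ j % 2 = k % 2 then
          ((T.card - 2 * j) / 2).choose ((k - j) / 2) * kappaFree T j
        else 0 := by
  split_ifs with hj
  · have hmaps : ∀ K ∈ (committees T k).filter (fun K => (freePart K).card = j),
        freePart K ∈ T.powerset.filter
          (fun K₀ => K₀.card = j ∧ IsCommittee T K₀ ∧ ∀ f ∈ K₀, negT f ∉ K₀) := by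
      intro K hK
      obtain ⟨⟨-, hK⟩, hKj⟩ := (mem_filter.mp hK).imp_left mem_committees.mp
      simp only [mem_filter, mem_powerset]
      exact ⟨(freePart_subset K).trans hK.1, hKj, (isCommittee_freePart_iff hK.1).mpr hK,
        negT_notMem_freePart K⟩
    rw [card_eq_sum_card_fiberwise hmaps, kappaFree, mul_comm, ← smul_eq_mul, ← sum_const]
    refine sum_congr rfl fun K₀ hK₀ => ?_
    obtain ⟨-, rfl, hK₀, hK₀free⟩ := (mem_filter.mp hK₀).imp_left mem_powerset.mp
    rw [← card_committees_filter_freePart_eq hT hK₀ hK₀free hjk hj.2, filter_filter]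
    exact congrArg card (filter_congr fun K _ => ⟨And.right, fun h => ⟨h ▸ rfl, h⟩⟩)
  · rw [card_eq_zero, filter_eq_empty_iff]
    intro K hK hKj
    obtain ⟨hKk, hK⟩ := mem_committees.mp hK
    refine hj ⟨?_, ?_⟩
    · exact hKj ▸ ((isCommittee_freePart_iff hK.1).mpr hK).nonempty.card_pos
    · rw [← hKj, ← hKk, card_freePart_mod_two]

end

theorem stmt8_general {E : Type*} [Nonempty E] (T : Finset (E → Bool))
    (hneg : ∀ f ∈ T, negT f ∈ T) (k : ℕ) :
    kappa T k
      = ∑ j ∈ Finset.range (k + 1),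
          if 1 ≤ j ∧ j % 2 = k % 2 then
            ((T.card - 2 * j) / 2).choose ((k - j) / 2) * kappaFree T j
          else 0 := by
  have hmaps : ∀ K ∈ committees T k, (freePart K).card ∈ range (k + 1) := fun K hK =>
    mem_range_succ_iff.mpr ((mem_committees.mp hK).1 ▸ card_le_card (freePart_subset K))
  rw [kappa, ← committees, card_eq_sum_card_fiberwise hmaps]
  exact sum_congr rfl fun j hj =>
    card_committees_filter_card_freePart hneg (mem_range_succ_iff.mp hj)

theorem stmt8 {E : Type*} [Fintype E] [Nonempty E] (T : Finset (E → Bool))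
    (hneg : ∀ f ∈ T, negT f ∈ T) (k : ℕ) (hk1 : 1 ≤ k) (hk2 : 2 * k ≤ T.card) :
    kappa T k
      = ∑ j ∈ Finset.range (k + 1),
          if 1 ≤ j ∧ j % 2 = k % 2 then
            ((T.card - 2 * j) / 2).choose ((k - j) / 2) * kappaFree T j
          else 0 :=
  stmt8_general T hneg k
end

section
/- If M is a simple oriented matroid that is not acyclic, then κ*_3(M) = κ°*_3(M), i.e., every 3-element tope committee is free of opposites. -/
open scoped Classical

lemma key13 {E : Type*} [Fintype E] [Nonempty E] (T : Finset (E → Bool))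
    (hnotacyclic : (((fun _ => true) : E → Bool)) ∉ T)
    (K : Finset (E → Bool)) (hK3 : K.card = 3) (hC : IsCommittee T K) :
    ∀ f ∈ K, negT f ∉ K := by
  intro f hf hnf
  have hfne : f ≠ negT f := by
    intro h
    have := congrFun h (Classical.arbitrary E)
    simp [negT] at this
  have hsub : ({f, negT f} : Finset (E → Bool)) ⊆ K := by
    intro x hx
    simp only [Finset.mem_insert, Finset.mem_singleton] at hx
    rcases hx with h | h <;> simp [h, hf, hnf]
  have hpair : ({f, negT f} : Finset (E → Bool)).card = 2 := by
    rw [Finset.card_insert_of_notMem (by simpa using hfne), Finset.card_singleton]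
  have hScard : (K \ {f, negT f}).card = 1 := by
    rw [Finset.card_sdiff_of_subset hsub, hpair, hK3]
  obtain ⟨g, hg⟩ := Finset.card_eq_one.mp hScard
  have hgmem : g ∈ K \ {f, negT f} := by rw [hg]; exact Finset.mem_singleton_self g
  rw [Finset.mem_sdiff, Finset.mem_insert, Finset.mem_singleton] at hgmem
  obtain ⟨hgK, hgne⟩ := hgmem
  push_neg at hgne
  have hKeq : K = {f, negT f, g} := by
    refine (Finset.eq_of_subset_of_card_le ?_ ?_).symm
    · intro x hx
      simp only [Finset.mem_insert, Finset.mem_singleton] at hx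
      rcases hx with h | h | h <;> simp [h, hf, hnf, hgK]
    · rw [hK3]
      rw [Finset.card_insert_of_notMem (by
          simp only [Finset.mem_insert, Finset.mem_singleton]
          push_neg
          exact ⟨hfne, fun h => hgne.1 h.symm⟩),
        Finset.card_insert_of_notMem (by
          simpa using fun h => hgne.2 h.symm), Finset.card_singleton]
  have hgall : ∀ e, g e = true := by
    intro e
    by_contra hge
    have h := hC.2 e
    rw [hK3, hKeq] at h
    rcases Bool.eq_false_or_eq_true (f e) with hfe | hfe
    · -- f e = true, so negT f e = false, filter = {f}
      have hnfe : negT f e = false := by simp [negT, hfe]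
      have hfilt : ({f, negT f, g} : Finset (E → Bool)).filter (fun x => x e = true)
          = {f} := by
        ext x
        simp only [Finset.mem_filter, Finset.mem_insert, Finset.mem_singleton]
        constructor
        · rintro ⟨h1 | h1 | h1, h2⟩ <;> subst h1 <;> simp_all
        · rintro rfl; exact ⟨Or.inl rfl, hfe⟩
      rw [hfilt] at h; simp at h
    · -- f e = false, so negT f e = true, filter = {negT f}
      have hnfe : negT f e = true := by simp [negT, hfe]
      have hfilt : ({f, negT f, g} : Finset (E → Bool)).filter (fun x => x e = true)
          = {negT f} := by
        ext x
        simp only [Finset.mem_filter, Finset.mem_insert, Finset.mem_singleton]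
        constructor
        · rintro ⟨h1 | h1 | h1, h2⟩ <;> subst h1 <;> simp_all
        · rintro rfl; exact ⟨Or.inr (Or.inl rfl), hnfe⟩
      rw [hfilt] at h; simp at h
  exact hnotacyclic (by
    have hgT : g ∈ T := hC.1 hgK
    have : g = (fun _ => true) := funext hgall
    rwa [this] at hgT)

theorem stmt13 {E : Type*} [Fintype E] [Nonempty E] (T : Finset (E → Bool))
    (hneg : ∀ f ∈ T, negT f ∈ T)
    (hnotacyclic : (((fun _ => true) : E → Bool)) ∉ T) :
    kappa T 3 = kappaFree T 3 := by
  unfold kappa kappaFree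
  congr 1
  ext K
  simp only [Finset.mem_filter, Finset.mem_powerset]
  constructor
  · rintro ⟨hKT, h3, hC⟩
    exact ⟨hKT, h3, hC, key13 T hnotacyclic K h3 hC⟩
  · rintro ⟨hKT, h3, hC, _⟩
    exact ⟨hKT, h3, hC⟩
end

section
/- Let T be the tope set of a simple oriented matroid M on E_t, and 1 ≤ k ≤ |T| - 1. A k-subset K ⊆ T is a tope committee for M, i.e. |K ∩ T⁺_e| > k/2 (equivalently |K ∩ T⁺_e| ≥ ⌊k/2⌋ + 1) for every e ∈ E_t, if and only if K ∩ G ≠ ∅ for every G ∈ binom(T⁺_e, |T⁺_e| - ⌊k/2⌋) and every e ∈ E_t. -/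
open scoped Classical

/-- A `k`-subset `K` of the tope set `T` is a committee iff it intersects every
subset of a positive halfspace `T⁺_e` of cardinality `|T⁺_e| - ⌊k/2⌋`. -/
theorem stmt16 {E : Type*} [Fintype E] [Nonempty E] (T : Finset (E → Bool))
    (hneg : ∀ f ∈ T, negT f ∈ T) (k : ℕ) (hk1 : 1 ≤ k) (hk2 : k ≤ T.card - 1)
    (K : Finset (E → Bool)) (hK : K ⊆ T) (hcard : K.card = k) :
    IsCommittee T K ↔
      ∀ e : E, ∀ G ⊆ T.filter (fun f => f e = true),
        G.card = (T.filter (fun f => f e = true)).card - k / 2 → (K ∩ G).Nonempty := by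
  have hKP : ∀ e : E, K.filter (fun f => f e = true)
      = K ∩ T.filter (fun f => f e = true) := by
    intro e
    ext f
    simp only [Finset.mem_filter, Finset.mem_inter]
    exact ⟨fun ⟨h1, h2⟩ => ⟨h1, hK h1, h2⟩, fun ⟨h1, _, h3⟩ => ⟨h1, h3⟩⟩
  constructor
  · rintro ⟨-, hc⟩ e G hG hGcard
    set P := T.filter (fun f => f e = true) with hP
    have ha : k / 2 < (K ∩ P).card := by
      have := hc e
      rw [hKP e, ← hP] at this
      omega
    by_contra hne
    rw [Finset.not_nonempty_iff_eq_empty] at hne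
    have hGsub : G ⊆ P \ K := by
      intro x hx
      refine Finset.mem_sdiff.mpr ⟨hG hx, fun hxK => ?_⟩
      have : x ∈ K ∩ G := Finset.mem_inter.mpr ⟨hxK, hx⟩
      simp [hne] at this
    have h1 : G.card ≤ (P \ K).card := Finset.card_le_card hGsub
    have h2 : (P ∩ K).card + (P \ K).card = P.card :=
      Finset.card_inter_add_card_sdiff P K
    have h3 : (P ∩ K).card = (K ∩ P).card := by rw [Finset.inter_comm]
    omega
  · intro h
    refine ⟨hK, fun e => ?_⟩
    set P := T.filter (fun f => f e = true) with hP
    rw [hcard, hKP e, ← hP]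
    by_contra hle
    have ha : (K ∩ P).card ≤ k / 2 := by omega
    have h2 : (P ∩ K).card + (P \ K).card = P.card :=
      Finset.card_inter_add_card_sdiff P K
    have h3 : (P ∩ K).card = (K ∩ P).card := by rw [Finset.inter_comm]
    have hsz : P.card - k / 2 ≤ (P \ K).card := by omega
    obtain ⟨G, hGsub, hGcard⟩ := Finset.exists_subset_card_eq hsz
    obtain ⟨x, hx⟩ := h e G (hGsub.trans (Finset.sdiff_subset)) hGcard
    rw [Finset.mem_inter] at hx
    exact (Finset.mem_sdiff.mp (hGsub hx.2)).2 hx.1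
end

section
/- Let X be a finite set with a fixed-point-free involution x ↦ -x, |X| = 2m, let 𝒜 be a finite family of nonempty subsets of X, and let ℰ be the lattice of unions of nonempty subfamilies of 𝒜 with adjoined least element 0̂ = ∅. Then the number of k-subsets K ⊆ X that block 𝒜 and are free of opposites equals C(m,k)·2^k + Σ_{z ∈ ℰ, z > 0̂} μ_ℰ(0̂,z)·Σ_{0 ≤ j ≤ k} C(|z ∪ (-z)| - |z|, j)·C(m - |z ∪ (-z)|/2, k-j)·2^{k-j}. -/
/-!
Inclusion–exclusion over the subfamilies `𝒢 ⊆ 𝒜` writes the number of opposite-free blocking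
`k`-sets as `∑ 𝒢, (-1)^|𝒢| N(⋃ 𝒢)`, where `N z` counts the opposite-free `k`-sets disjoint from
`z`. Grouping the terms by the union `z = ⋃ 𝒢`, the coefficient `∑_{⋃ 𝒢 = z} (-1)^|𝒢|` satisfies
the recurrence defining `μ_ℰ(0̂, z)` (Rota's crosscut theorem), so the sum is `∑_z μ(z) N(z)`.

An opposite-free set avoiding `z` splits into a part of `(z ∪ -z) \ z`, which is automatically
opposite-free because the opposites of its elements lie in `z`, and an opposite-free part of the
closed set `X \ (z ∪ -z)`. A closed set with `n` pairs `{x, -x}` has `C(n, i) 2^i` opposite-free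
`i`-subsets, by Pascal's rule: a removed pair contributes either nothing or one of its two elements.
-/

open Finset

theorem even_card_of_involution {α : Type*} {neg : α → α} {W : Finset α}
    (hinv : ∀ x ∈ W, neg (neg x) = x) (hfpf : ∀ x ∈ W, neg x ≠ x)
    (hclosed : ∀ x ∈ W, neg x ∈ W) : Even #W := by
  have : ∑ _x ∈ W, (1 : ZMod 2) = 0 :=
    sum_involution (fun x _ => neg x) (fun _ _ => by decide) (fun x hx _ => hfpf x hx)
      hclosed hinv
  simpa [ZMod.natCast_eq_zero_iff_even] using this

theorem eqOn_of_sum_filter_le_eq {β M : Type*} [PartialOrder β] [WellFoundedLT β]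
    [DecidableEq β] [DecidableLE β] [AddCommGroup M] (L : Finset β) {f g : β → M}
    (h : ∀ z ∈ L, ∑ y ∈ L with y ≤ z, f y = ∑ y ∈ L with y ≤ z, g y) :
    ∀ z ∈ L, f z = g z := by
  intro z
  induction z using WellFoundedLT.induction with
  | _ z ih =>
    intro hz
    have hzz : z ∈ {y ∈ L | y ≤ z} := mem_filter.2 ⟨hz, le_rfl⟩
    have hlt : ∑ y ∈ {y ∈ L | y ≤ z}.erase z, f y = ∑ y ∈ {y ∈ L | y ≤ z}.erase z, g y := by
      refine sum_congr rfl fun y hy => ?_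
      obtain ⟨hyz, hy⟩ := mem_erase.1 hy
      obtain ⟨hyL, hyz'⟩ := mem_filter.1 hy
      exact ih y (lt_of_le_of_ne hyz' hyz) hyL
    have := h z hz
    rw [← add_sum_erase _ _ hzz, ← add_sum_erase _ _ hzz, hlt] at this
    exact add_right_cancel this

theorem card_filter_forall_not_eq_sum_powerset {β γ : Type*} [DecidableEq γ] (S : Finset β)
    (𝒜 : Finset γ) (R : β → γ → Prop) [∀ b c, Decidable (R b c)] :
    (#{V ∈ S | ∀ A ∈ 𝒜, ¬ R V A} : ℤ)
      = ∑ 𝒢 ∈ 𝒜.powerset, (-1 : ℤ) ^ #𝒢 * #{V ∈ S | ∀ A ∈ 𝒢, R V A} := by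
  have indicator : ∀ V, (if ∀ A ∈ 𝒜, ¬ R V A then 1 else 0 : ℤ)
      = ∑ 𝒢 ∈ 𝒜.powerset, if ∀ A ∈ 𝒢, R V A then (-1 : ℤ) ^ #𝒢 else 0 := by
    intro V
    have : {𝒢 ∈ 𝒜.powerset | ∀ A ∈ 𝒢, R V A} = {A ∈ 𝒜 | R V A}.powerset := by
      ext 𝒢
      simp only [mem_filter, mem_powerset, subset_iff]
      exact ⟨fun h A hA => ⟨h.1 hA, h.2 A hA⟩,
        fun h => ⟨fun A hA => (h hA).1, fun A hA => (h hA).2⟩⟩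
    rw [← sum_filter, this, sum_powerset_neg_one_pow_card]
    exact if_congr filter_eq_empty_iff.symm rfl rfl
  simp only [natCast_card_filter, indicator, mul_sum, mul_ite, mul_one, mul_zero]
  exact sum_comm

section OppositeFree

variable {α : Type*} [DecidableEq α] {neg : α → α}

theorem card_filter_powersetCard_union {s t : Finset α} (hst : Disjoint s t)
    (p q : Finset α → Prop) [DecidablePred p] [DecidablePred q] (k : ℕ) :
    #{V ∈ (s ∪ t).powersetCard k | p (V ∩ s) ∧ q (V ∩ t)}
      = ∑ j ∈ range (k + 1),
          #{A ∈ s.powersetCard j | p A} * #{B ∈ t.powersetCard (k - j) | q B} := by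
  have card_split : ∀ {V}, V ⊆ s ∪ t → #(V ∩ s) + #(V ∩ t) = #V := fun hV => by
    rw [← card_union_of_disjoint (hst.mono inter_subset_right inter_subset_right),
      ← inter_union_distrib_left, inter_eq_left.2 hV]
  have inter_left : ∀ {A B}, A ⊆ s → B ⊆ t → (A ∪ B) ∩ s = A := fun hA hB => by
    rw [union_inter_distrib_right, inter_eq_left.2 hA,
      disjoint_iff_inter_eq_empty.1 (hst.symm.mono_left hB), union_empty]
  have inter_right : ∀ {A B}, A ⊆ s → B ⊆ t → (A ∪ B) ∩ t = B := fun hA hB => by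
    rw [union_inter_distrib_right, inter_eq_left.2 hB,
      disjoint_iff_inter_eq_empty.1 (hst.mono_left hA), empty_union]
  rw [card_eq_sum_card_fiberwise (f := fun V => #(V ∩ s)) (t := range (k + 1))]
  · refine sum_congr rfl fun j hj => ?_
    have hjk := mem_range.1 hj
    rw [← card_product]
    refine card_nbij' (fun V => (V ∩ s, V ∩ t)) (fun P => P.1 ∪ P.2) ?_ ?_ ?_ ?_
    · intro V hV
      simp only [mem_coe, mem_filter, mem_product, mem_powersetCard] at hV ⊢
      obtain ⟨⟨⟨hVst, rfl⟩, hp, hq⟩, rfl⟩ := hV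
      have := card_split hVst
      exact ⟨⟨⟨inter_subset_right, rfl⟩, hp⟩, ⟨inter_subset_right, by omega⟩, hq⟩
    · rintro ⟨A, B⟩ hAB
      simp only [mem_coe, mem_filter, mem_product, mem_powersetCard] at hAB ⊢
      obtain ⟨⟨⟨hA, rfl⟩, hp⟩, ⟨hB, hBk⟩, hq⟩ := hAB
      rw [inter_left hA hB, inter_right hA hB, card_union_of_disjoint (hst.mono hA hB)]
      exact ⟨⟨⟨union_subset_union hA hB, by omega⟩, hp, hq⟩, rfl⟩
    · intro V hV
      simp only [mem_coe, mem_filter, mem_powersetCard] at hV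
      simp only [← inter_union_distrib_left, inter_eq_left.2 hV.1.1.1]
    · rintro ⟨A, B⟩ hAB
      simp only [mem_coe, mem_filter, mem_product, mem_powersetCard] at hAB
      simp only [inter_left hAB.1.1.1 hAB.2.1.1, inter_right hAB.1.1.1 hAB.2.1.1]
  · intro V hV
    simp only [mem_coe, mem_filter, mem_powersetCard, mem_range] at hV ⊢
    have := card_split hV.1.1
    omega

theorem oppositeFree_iff_inter {s t V : Finset α} (hV : V ⊆ s ∪ t)
    (hs : ∀ x ∈ s, neg x ∈ s) (ht : ∀ x ∈ t, neg x ∈ t) :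
    (∀ v ∈ V, neg v ∉ V) ↔
      (∀ v ∈ V ∩ s, neg v ∉ V ∩ s) ∧ ∀ v ∈ V ∩ t, neg v ∉ V ∩ t := by
  simp only [mem_inter]
  refine ⟨fun h => ⟨fun v hv hnv => h v hv.1 hnv.1, fun v hv hnv => h v hv.1 hnv.1⟩, ?_⟩
  rintro ⟨hVs, hVt⟩ v hv hnv
  rcases mem_union.1 (hV hv) with h | h
  · exact hVs v ⟨hv, h⟩ ⟨hnv, hs v h⟩
  · exact hVt v ⟨hv, h⟩ ⟨hnv, ht v h⟩

theorem neg_mem_sdiff {s t : Finset α} (hinv : ∀ x ∈ s, neg (neg x) = x)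
    (hs : ∀ x ∈ s, neg x ∈ s) (ht : ∀ x ∈ t, neg x ∈ t) : ∀ x ∈ s \ t, neg x ∈ s \ t := by
  intro x hx
  rw [mem_sdiff] at hx ⊢
  exact ⟨hs x hx.1, fun h => hx.2 (hinv x hx.1 ▸ ht _ h)⟩

theorem neg_mem_union_image {z : Finset α} (hinv : ∀ x ∈ z, neg (neg x) = x) :
    ∀ x ∈ z ∪ z.image neg, neg x ∈ z ∪ z.image neg := by
  intro x hx
  rcases mem_union.1 hx with hx | hx
  · exact mem_union_right _ (mem_image_of_mem neg hx)
  · obtain ⟨y, hy, rfl⟩ := mem_image.1 hx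
    rw [hinv y hy]
    exact mem_union_left _ hy

theorem filter_oppositeFree_disjoint_powersetCard_union_image {z : Finset α}
    (hinv : ∀ x ∈ z, neg (neg x) = x) (j : ℕ) :
    {A ∈ (z ∪ z.image neg).powersetCard j | (∀ v ∈ A, neg v ∉ A) ∧ Disjoint A z}
      = ((z ∪ z.image neg) \ z).powersetCard j := by
  ext A
  simp only [mem_filter, mem_powersetCard, subset_sdiff]
  refine ⟨fun h => ⟨⟨h.1.1, h.2.2⟩, h.1.2⟩, fun h => ⟨⟨h.1.1, h.2⟩, ?_, h.1.2⟩⟩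
  intro v hv hnv
  obtain ⟨y, hy, rfl⟩ :=
    mem_image.1 ((mem_union.1 (h.1.1 hv)).resolve_left (disjoint_left.1 h.1.2 hv))
  rw [hinv y hy] at hnv
  exact disjoint_left.1 h.1.2 hnv hy

theorem card_oppositeFree_powersetCard_pair {x : α} (hx : neg x ≠ x) (hxx : neg (neg x) = x)
    (j : ℕ) : #{A ∈ ({x, neg x} : Finset α).powersetCard j | ∀ v ∈ A, neg v ∉ A}
      = if j = 0 then 1 else if j = 1 then 2 else 0 := by
  rcases j with _ | _ | j
  · simp [filter_singleton]
  · rw [powersetCard_one]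
    simp [filter_insert, filter_singleton, hx, hx.symm, hxx]
  · simp only [Nat.add_eq_zero_iff, one_ne_zero, and_false, ↓reduceIte, Nat.add_eq_right,
      card_eq_zero, filter_eq_empty_iff, mem_powersetCard]
    rintro A ⟨hA, hAcard⟩
    obtain rfl : A = {x, neg x} :=
      eq_of_subset_of_card_le hA (by rw [card_pair hx.symm]; omega)
    simp

theorem card_oppositeFree_powersetCard {W : Finset α} {n : ℕ}
    (hinv : ∀ x ∈ W, neg (neg x) = x) (hfpf : ∀ x ∈ W, neg x ≠ x)
    (hclosed : ∀ x ∈ W, neg x ∈ W) (hW : #W = 2 * n) (i : ℕ) :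
    #{V ∈ W.powersetCard i | ∀ v ∈ V, neg v ∉ V} = n.choose i * 2 ^ i := by
  induction n generalizing W i with
  | zero =>
    rw [card_eq_zero.1 hW]
    rcases i with _ | i <;> simp [filter_singleton]
  | succ n ih =>
    obtain ⟨x, hx⟩ : W.Nonempty := card_pos.1 (by omega)
    set P : Finset α := {x, neg x}
    have hPW : P ⊆ W := insert_subset hx (singleton_subset_iff.2 (hclosed x hx))
    have hP : ∀ y ∈ P, neg y ∈ P := by simp [P, hinv x hx]
    have hW' : ∀ y ∈ W \ P, neg y ∈ W \ P := neg_mem_sdiff hinv hclosed hP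
    have hcard : #(W \ P) = 2 * n := by
      rw [card_sdiff_of_subset hPW, card_pair (hfpf x hx).symm]; omega
    have ih' := ih (fun y hy => hinv y (mem_sdiff.1 hy).1)
      (fun y hy => hfpf y (mem_sdiff.1 hy).1) hW' hcard
    have hsplit : {V ∈ W.powersetCard i | ∀ v ∈ V, neg v ∉ V}
        = {V ∈ (P ∪ W \ P).powersetCard i |
            (∀ v ∈ V ∩ P, neg v ∉ V ∩ P) ∧ ∀ v ∈ V ∩ (W \ P), neg v ∉ V ∩ (W \ P)} := by
      rw [union_sdiff_of_subset hPW]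
      refine filter_congr fun V hV => oppositeFree_iff_inter ?_ hP hW'
      rw [union_sdiff_of_subset hPW]
      exact (mem_powersetCard.1 hV).1
    rw [hsplit, card_filter_powersetCard_union disjoint_sdiff (fun A => ∀ v ∈ A, neg v ∉ A)
      (fun B => ∀ v ∈ B, neg v ∉ B)]
    simp only [P, card_oppositeFree_powersetCard_pair (hfpf x hx) (hinv x hx), ih']
    rcases i with _ | i
    · simp
    · rw [sum_range_succ', sum_range_succ', Nat.choose_succ_succ]
      simp only [Nat.add_eq_zero_iff, one_ne_zero, and_false, ↓reduceIte, Nat.add_eq_right,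
        Nat.reduceSubDiff, zero_mul, sum_const_zero, zero_add, add_tsub_cancel_right, tsub_zero,
        pow_succ]
      ring

theorem card_oppositeFree_powersetCard_disjoint {X z : Finset α} {m : ℕ}
    (hinv : ∀ x ∈ X, neg (neg x) = x) (hfpf : ∀ x ∈ X, neg x ≠ x)
    (hclosed : ∀ x ∈ X, neg x ∈ X) (hX : #X = 2 * m) (hz : z ⊆ X) (k : ℕ) :
    #{V ∈ X.powersetCard k | (∀ v ∈ V, neg v ∉ V) ∧ Disjoint V z}
      = ∑ j ∈ range (k + 1), (#(z ∪ z.image neg) - #z).choose j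
          * (m - #(z ∪ z.image neg) / 2).choose (k - j) * 2 ^ (k - j) := by
  set W := z ∪ z.image neg
  have hzW : z ⊆ W := subset_union_left
  have hWX : W ⊆ X := union_subset hz (image_subset_iff.2 fun y hy => hclosed y (hz hy))
  have hW : ∀ x ∈ W, neg x ∈ W := neg_mem_union_image fun x hx => hinv x (hz hx)
  have hY : ∀ x ∈ X \ W, neg x ∈ X \ W := neg_mem_sdiff hinv hclosed hW
  obtain ⟨p, hp⟩ := even_card_of_involution (fun x hx => hinv x (hWX hx))
    (fun x hx => hfpf x (hWX hx)) hW
  have hhalf : #W / 2 = p := by omega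
  have hYcard : #(X \ W) = 2 * (m - p) := by
    have := card_le_card hWX
    rw [card_sdiff_of_subset hWX]; omega
  have hsplit : {V ∈ X.powersetCard k | (∀ v ∈ V, neg v ∉ V) ∧ Disjoint V z}
      = {V ∈ (W ∪ X \ W).powersetCard k |
          ((∀ v ∈ V ∩ W, neg v ∉ V ∩ W) ∧ Disjoint (V ∩ W) z) ∧
            ∀ v ∈ V ∩ (X \ W), neg v ∉ V ∩ (X \ W)} := by
    rw [union_sdiff_of_subset hWX]
    refine filter_congr fun V hV => ?_
    have hVWX : V ⊆ W ∪ X \ W := by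
      rw [union_sdiff_of_subset hWX]
      exact (mem_powersetCard.1 hV).1
    have hVWz : Disjoint (V ∩ W) z ↔ Disjoint V z := by
      rw [disjoint_iff_inter_eq_empty, disjoint_iff_inter_eq_empty, inter_assoc,
        inter_eq_right.2 hzW]
    rw [hVWz, oppositeFree_iff_inter hVWX hW hY]
    tauto
  rw [hsplit, card_filter_powersetCard_union disjoint_sdiff
    (fun A => (∀ v ∈ A, neg v ∉ A) ∧ Disjoint A z) (fun B => ∀ v ∈ B, neg v ∉ B)]
  refine sum_congr rfl fun j _ => ?_
  rw [filter_oppositeFree_disjoint_powersetCard_union_image (fun x hx => hinv x (hz hx)),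
    card_powersetCard, card_sdiff_of_subset hzW, hhalf, mul_assoc,
    card_oppositeFree_powersetCard (fun x hx => hinv x (mem_sdiff.1 hx).1)
      (fun x hx => hfpf x (mem_sdiff.1 hx).1) hY hYcard]

end OppositeFree

open scoped Classical

/-- The lattice ℰ of all unions of nonempty subfamilies of the family `𝒜`,
with the empty set adjoined as the least element `0̂`. -/
def unionLattice {α : Type*} [DecidableEq α] (𝒜 : Finset (Finset α)) : Finset (Finset α) :=
  insert ∅ ((𝒜.powerset.filter (fun 𝒢 => 𝒢.Nonempty)).image (fun 𝒢 => 𝒢.sup id))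

section UnionLattice

variable {α : Type*} [DecidableEq α] {𝒜 : Finset (Finset α)}

theorem mem_unionLattice {z : Finset α} : z ∈ unionLattice 𝒜 ↔ ∃ 𝒢 ⊆ 𝒜, 𝒢.sup id = z := by
  simp only [unionLattice, mem_insert, mem_image, mem_filter, mem_powerset]
  constructor
  · rintro (rfl | ⟨𝒢, ⟨h𝒢, -⟩, rfl⟩)
    · exact ⟨∅, empty_subset _, sup_empty⟩
    · exact ⟨𝒢, h𝒢, rfl⟩
  · rintro ⟨𝒢, h𝒢, rfl⟩
    rcases 𝒢.eq_empty_or_nonempty with rfl | hne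
    · exact Or.inl sup_empty
    · exact Or.inr ⟨𝒢, ⟨h𝒢, hne⟩, rfl⟩

theorem sup_mem_unionLattice {𝒢 : Finset (Finset α)} (h𝒢 : 𝒢 ⊆ 𝒜) :
    𝒢.sup id ∈ unionLattice 𝒜 :=
  mem_unionLattice.2 ⟨𝒢, h𝒢, rfl⟩

theorem subset_of_mem_unionLattice {X z : Finset α} (h𝒜X : ∀ A ∈ 𝒜, A ⊆ X)
    (hz : z ∈ unionLattice 𝒜) : z ⊆ X := by
  obtain ⟨𝒢, h𝒢, rfl⟩ := mem_unionLattice.1 hz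
  exact Finset.sup_le fun A hA => h𝒜X A (h𝒢 hA)

theorem mobius_unionLattice_eq_sum_powerset (h𝒜 : ∀ A ∈ 𝒜, A.Nonempty) {μ : Finset α → ℤ}
    (hμ : ∀ z ∈ unionLattice 𝒜,
      ∑ y ∈ (unionLattice 𝒜).filter (fun y => y ⊆ z), μ y = if z = ∅ then 1 else 0) :
    ∀ z ∈ unionLattice 𝒜, μ z = ∑ 𝒢 ∈ 𝒜.powerset with 𝒢.sup id = z, (-1 : ℤ) ^ #𝒢 := by
  refine eqOn_of_sum_filter_le_eq _ fun z hz => (hμ z hz).trans ?_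
  obtain ⟨𝒢z, h𝒢z, rfl⟩ := mem_unionLattice.1 hz
  have hfiber : ∀ y ⊆ 𝒢z.sup id, {𝒢 ∈ 𝒜.powerset | 𝒢.sup id = y}
      = {𝒢 ∈ {A ∈ 𝒜 | A ⊆ 𝒢z.sup id}.powerset | 𝒢.sup id = y} := by
    intro y hy
    ext 𝒢
    simp only [mem_filter, mem_powerset]
    constructor
    · rintro ⟨h𝒢, rfl⟩
      exact ⟨fun A hA => mem_filter.2 ⟨h𝒢 hA, (le_sup (f := id) hA).trans hy⟩, rfl⟩
    · rintro ⟨h𝒢, rfl⟩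
      exact ⟨h𝒢.trans (filter_subset _ _), rfl⟩
  have hmaps : ∀ 𝒢 ∈ {A ∈ 𝒜 | A ⊆ 𝒢z.sup id}.powerset,
      𝒢.sup id ∈ {y ∈ unionLattice 𝒜 | y ≤ 𝒢z.sup id} := fun 𝒢 h𝒢 =>
    mem_filter.2 ⟨sup_mem_unionLattice ((mem_powerset.1 h𝒢).trans (filter_subset _ _)),
      Finset.sup_le fun A hA => (mem_filter.1 (mem_powerset.1 h𝒢 hA)).2⟩
  have hsup_eq_empty : 𝒢z.sup id = ∅ ↔ {A ∈ 𝒜 | A ⊆ 𝒢z.sup id} = ∅ := by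
    constructor
    · intro h
      rw [h]
      exact filter_eq_empty_iff.2 fun A hA hA0 => (h𝒜 A hA).ne_empty (subset_empty.1 hA0)
    · intro h
      rcases 𝒢z.eq_empty_or_nonempty with rfl | ⟨A, hA⟩
      · exact sup_empty
      · exact absurd h (ne_empty_of_mem (mem_filter.2 ⟨h𝒢z hA, le_sup (f := id) hA⟩))
  rw [sum_congr rfl fun y hy => by rw [hfiber y (mem_filter.1 hy).2],
    sum_fiberwise_of_maps_to hmaps, sum_powerset_neg_one_pow_card]
  exact if_congr hsup_eq_empty rfl rfl

theorem sum_powerset_sup_eq_sum_unionLattice (h𝒜 : ∀ A ∈ 𝒜, A.Nonempty) {μ : Finset α → ℤ}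
    (hμ : ∀ z ∈ unionLattice 𝒜,
      ∑ y ∈ (unionLattice 𝒜).filter (fun y => y ⊆ z), μ y = if z = ∅ then 1 else 0)
    (f : Finset α → ℤ) :
    ∑ 𝒢 ∈ 𝒜.powerset, (-1 : ℤ) ^ #𝒢 * f (𝒢.sup id) = ∑ z ∈ unionLattice 𝒜, μ z * f z := by
  rw [← sum_fiberwise_of_maps_to fun 𝒢 h𝒢 => sup_mem_unionLattice (mem_powerset.1 h𝒢)]
  refine sum_congr rfl fun z hz => ?_
  rw [mobius_unionLattice_eq_sum_powerset h𝒜 hμ z hz, sum_mul]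
  exact sum_congr rfl fun 𝒢 h𝒢 => by rw [(mem_filter.1 h𝒢).2]

end UnionLattice

theorem stmt19_general {α : Type*} [DecidableEq α] (neg : α → α) (X : Finset α) (m : ℕ)
    (hinv : ∀ x ∈ X, neg (neg x) = x) (hfpf : ∀ x ∈ X, neg x ≠ x)
    (hclosed : ∀ x ∈ X, neg x ∈ X) (hcard : X.card = 2 * m)
    (𝒜 : Finset (Finset α)) (h𝒜X : ∀ A ∈ 𝒜, A ⊆ X) (h𝒜ne : ∀ A ∈ 𝒜, A.Nonempty)
    (k : ℕ)
    (μ : Finset α → ℤ)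
    -- μ is the Möbius function μ_ℰ(0̂, ·) of the lattice ℰ, characterized by its
    -- defining recurrence: ∑_{y ≤ z} μ(0̂, y) = δ_{z,0̂} for all z ∈ ℰ.
    (hμ : ∀ z ∈ unionLattice 𝒜,
      ∑ y ∈ (unionLattice 𝒜).filter (fun y => y ⊆ z), μ y = if z = ∅ then 1 else 0) :
    ((X.powerset.filter
        (fun V => V.card = k ∧ (∀ v ∈ V, neg v ∉ V) ∧ ∀ A ∈ 𝒜, (V ∩ A).Nonempty)).card : ℤ)
      = (m.choose k * 2 ^ k : ℕ)
        + ∑ z ∈ (unionLattice 𝒜).filter (fun z => z ≠ ∅),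
            μ z * ∑ j ∈ Finset.range (k + 1),
              ((((z ∪ z.image neg).card - z.card).choose j
                * (m - (z ∪ z.image neg).card / 2).choose (k - j)
                * 2 ^ (k - j) : ℕ) : ℤ) := by
  set N : Finset α → ℤ := fun z => #{V ∈ X.powersetCard k | (∀ v ∈ V, neg v ∉ V) ∧ Disjoint V z}
  have hblock : X.powerset.filter
      (fun V => V.card = k ∧ (∀ v ∈ V, neg v ∉ V) ∧ ∀ A ∈ 𝒜, (V ∩ A).Nonempty)
      = {V ∈ {V ∈ X.powersetCard k | ∀ v ∈ V, neg v ∉ V} | ∀ A ∈ 𝒜, ¬ Disjoint V A} := by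
    ext V
    simp only [mem_filter, mem_powerset, mem_powersetCard, not_disjoint_iff_nonempty_inter,
      and_assoc]
  have hdisjoint_sup : ∀ 𝒢 : Finset (Finset α),
      #{V ∈ {V ∈ X.powersetCard k | ∀ v ∈ V, neg v ∉ V} | ∀ A ∈ 𝒢, Disjoint V A}
        = N (𝒢.sup id) := by
    intro 𝒢
    simp only [N, filter_filter, Finset.disjoint_sup_right, id]
  have hbot : (∅ : Finset α) ∈ unionLattice 𝒜 := sup_mem_unionLattice (empty_subset 𝒜)
  have hμbot : μ ∅ = 1 := by simpa [filter_eq', hbot] using hμ ∅ hbot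
  have hNbot : N ∅ = (m.choose k * 2 ^ k : ℕ) := by
    simp only [N, disjoint_empty_right, and_true]
    rw [card_oppositeFree_powersetCard hinv hfpf hclosed hcard]
  calc _ = ∑ 𝒢 ∈ 𝒜.powerset, (-1 : ℤ) ^ #𝒢 * N (𝒢.sup id) := by
        rw [hblock, card_filter_forall_not_eq_sum_powerset]
        simp only [hdisjoint_sup]
    _ = ∑ z ∈ unionLattice 𝒜, μ z * N z := sum_powerset_sup_eq_sum_unionLattice h𝒜ne hμ N
    _ = _ := by
        rw [← add_sum_erase _ _ hbot, hμbot, hNbot, one_mul, ← filter_ne']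
        refine congrArg _ (sum_congr rfl fun z hz => ?_)
        simp only [N]
        rw [card_oppositeFree_powersetCard_disjoint hinv hfpf hclosed hcard
          (subset_of_mem_unionLattice h𝒜X (mem_filter.1 hz).1), Nat.cast_sum]

theorem stmt19 {α : Type*} [DecidableEq α] (neg : α → α) (X : Finset α) (m : ℕ)
    (hinv : ∀ x ∈ X, neg (neg x) = x) (hfpf : ∀ x ∈ X, neg x ≠ x)
    (hclosed : ∀ x ∈ X, neg x ∈ X) (hcard : X.card = 2 * m)
    (𝒜 : Finset (Finset α)) (h𝒜X : ∀ A ∈ 𝒜, A ⊆ X) (h𝒜ne : ∀ A ∈ 𝒜, A.Nonempty)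
    (k : ℕ) (hk : k ≤ m)
    (μ : Finset α → ℤ)
    -- μ is the Möbius function μ_ℰ(0̂, ·) of the lattice ℰ, characterized by its
    -- defining recurrence: ∑_{y ≤ z} μ(0̂, y) = δ_{z,0̂} for all z ∈ ℰ.
    (hμ : ∀ z ∈ unionLattice 𝒜,
      ∑ y ∈ (unionLattice 𝒜).filter (fun y => y ⊆ z), μ y = if z = ∅ then 1 else 0) :
    ((X.powerset.filter
        (fun V => V.card = k ∧ (∀ v ∈ V, neg v ∉ V) ∧ ∀ A ∈ 𝒜, (V ∩ A).Nonempty)).card : ℤ)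
      = (m.choose k * 2 ^ k : ℕ)
        + ∑ z ∈ (unionLattice 𝒜).filter (fun z => z ≠ ∅),
            μ z * ∑ j ∈ Finset.range (k + 1),
              ((((z ∪ z.image neg).card - z.card).choose j
                * (m - (z ∪ z.image neg).card / 2).choose (k - j)
                * 2 ^ (k - j) : ℕ) : ℤ) :=
  stmt19_general neg X m hinv hfpf hclosed hcard 𝒜 h𝒜X h𝒜ne k μ hμ
end
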